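/- For the Catalan polynomials Q_n defined by Q_{-1}=0, Q_0=1, Q_{n+1}=x·Q_n − Q_{n-1}, and the Catalan moments μ (μ_{2m} = C(2m,m)/(m+1), μ_{odd}=0), the polynomial Q_n equals the determinant of the (n+1)×(n+1) matrix whose rows 0,…,n−1 are (μ_{i+j})_{j=0}^n and whose last row is (1, x, …, xⁿ). -/

import Mathlib

/-- Catalan moments: `μ_{2m} = C(2m,m)/(m+1)`, `μ_{odd} = 0`. -/
noncomputable def catMoment (n : ℕ) : ℚ :=
  if Even n then (Nat.choose n (n / 2) : ℚ) / (n / 2 + 1) else 0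

/-- Catalan polynomials: `Q 0 = 1`, `Q 1 = x`, `Q (n+2) = x Q (n+1) - Q n`. -/
noncomputable def catPoly : ℕ → Polynomial ℚ
  | 0 => 1
  | 1 => Polynomial.X
  | n + 2 => Polynomial.X * catPoly (n + 1) - catPoly n

open Polynomial Finset

lemma catPoly_monic_natDegree (n : ℕ) :
    (catPoly n).Monic ∧ (catPoly n).natDegree = n := by
  induction n using Nat.twoStepInduction with
  | zero => exact ⟨monic_one, natDegree_one⟩
  | one => exact ⟨monic_X, natDegree_X⟩
  | more n ih1 ih2 =>
    obtain ⟨hm1, hd1⟩ := ih1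
    obtain ⟨hm2, hd2⟩ := ih2
    have hxm : (X * catPoly (n + 1)).Monic := monic_X.mul hm2
    have hxd : (X * catPoly (n + 1)).natDegree = n + 2 := by
      rw [monic_X.natDegree_mul hm2, natDegree_X, hd2]; omega
    have hlt : (catPoly n).degree < (X * catPoly (n + 1)).degree :=
      degree_lt_degree (by omega)
    refine ⟨?_, ?_⟩
    · rw [catPoly]; exact hxm.sub_of_left hlt
    · rw [catPoly, natDegree_sub_eq_left_of_natDegree_lt (by omega), hxd]

/-- The moment functional. -/
noncomputable def catL : Polynomial ℚ →ₗ[ℚ] ℚ :=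
  Polynomial.lsum (fun k => catMoment k • LinearMap.id)

lemma catL_monomial (k : ℕ) (c : ℚ) : catL (monomial k c) = c * catMoment k := by
  simp [catL, Polynomial.sum_monomial_index, mul_comm]

lemma catL_Xpow (k : ℕ) : catL (X ^ k) = catMoment k := by
  rw [← Polynomial.monomial_one_right_eq_X_pow, catL_monomial, one_mul]

lemma catL_Xpow_mul (i N : ℕ) (p : Polynomial ℚ) (h : p.natDegree < N) :
    catL (X ^ i * p) = ∑ k ∈ range N, p.coeff k * catMoment (i + k) := by
  conv_lhs => rw [p.as_sum_range' N h, Finset.mul_sum, map_sum]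
  refine Finset.sum_congr rfl fun k _ => ?_
  rw [← Polynomial.monomial_one_right_eq_X_pow, Polynomial.monomial_mul_monomial,
    one_mul, catL_monomial]

/-- Ballot numbers. -/
noncomputable def catB (i j : ℕ) : ℚ :=
  if j ≤ i ∧ (i - j) % 2 = 0 then
    ((j : ℚ) + 1) * (Nat.choose (i + 1) ((i - j) / 2)) / ((i : ℚ) + 1) else 0

lemma catB_of_lt {i j : ℕ} (h : i < j) : catB i j = 0 := by
  simp [catB, Nat.not_le.2 h]

lemma catB_diag (i : ℕ) : catB i i = 1 := by
  have h : ((i : ℚ) + 1) ≠ 0 := by positivity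
  simp [catB, div_eq_one_iff_eq h]

lemma catB_zero (i : ℕ) : catB i 0 = catMoment i := by
  rcases Nat.even_or_odd i with ⟨m, hm⟩ | ⟨m, hm⟩
  · subst hm
    have h2 : m + m = 2 * m := by ring
    have key := Nat.add_one_mul_choose_eq (2 * m) m
    have hsymm : Nat.choose (2 * m + 1) (m + 1) = Nat.choose (2 * m + 1) m := by
      have := Nat.choose_symm (n := 2 * m + 1) (k := m) (by omega)
      rw [show 2 * m + 1 - m = m + 1 by omega] at this
      exact this
    rw [hsymm] at key
    have keyQ : ((2 * m : ℕ) + 1 : ℚ) * (Nat.choose (2 * m) m : ℚ)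
        = (Nat.choose (2 * m + 1) m : ℚ) * ((m : ℚ) + 1) := by exact_mod_cast key
    have hme : Even (m + m) := ⟨m, rfl⟩
    simp only [catB, catMoment, h2, if_pos hme, Nat.sub_zero, Nat.zero_le, true_and,
      Nat.mul_mod_right, if_pos rfl, Nat.mul_div_cancel_left _ (by norm_num : 0 < 2)]
    rw [if_pos trivial, if_pos (even_two_mul m)]
    have h1 : ((2*m : ℕ) : ℚ) + 1 ≠ 0 := by positivity
    have h3 : ((2*m : ℕ) : ℚ) / 2 + 1 ≠ 0 := by positivity
    field_simp
    push_cast at keyQ ⊢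
    linear_combination -2 * keyQ
  · subst hm
    have : ¬ Even (2 * m + 1) := by simp [Nat.even_iff]
    rw [catMoment, if_neg this, catB]
    rw [if_neg]
    simp only [Nat.sub_zero, Nat.zero_le, true_and]
    omega

lemma catB_one (i : ℕ) : catB i 1 = catMoment (i + 1) := by
  rcases Nat.even_or_odd i with ⟨m, hm⟩ | ⟨m, hm⟩
  · have h1 : ¬ Even (i + 1) := by subst hm; simp [Nat.even_iff]; omega
    rw [catMoment, if_neg h1, catB, if_neg]
    rintro ⟨ha, hb⟩
    omega
  · subst hm
    have hcond : 1 ≤ 2 * m + 1 ∧ (2 * m + 1 - 1) % 2 = 0 := by omega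
    have heven : Even (2 * m + 1 + 1) := by simp [Nat.even_iff]
    rw [catB, if_pos hcond, catMoment, if_pos heven]
    rw [show 2 * m + 1 - 1 = 2 * m by omega, show (2*m)/2 = m from Nat.mul_div_cancel_left _ (by norm_num),
      show 2 * m + 1 + 1 = 2 * m + 2 by ring, show (2*m+2)/2 = m + 1 by omega,
      show 2 * m + 1 + 1 = 2 * m + 2 by ring]
    have key := Nat.choose_succ_right_eq (2 * m + 2) m
    rw [show 2 * m + 2 - m = m + 2 by omega] at key
    have keyQ : (Nat.choose (2*m+2) (m+1) : ℚ) * ((m:ℚ) + 1) = (Nat.choose (2*m+2) m : ℚ) * ((m:ℚ)+2) := by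
      exact_mod_cast key
    have h2 : ((2*m+1 : ℕ) : ℚ) + 1 ≠ 0 := by positivity
    have h3 : ((m+1 : ℕ) : ℚ) + 1 ≠ 0 := by positivity
    push_cast at h2 h3 ⊢
    field_simp
    linear_combination -2 * keyQ

lemma catB_rec (i j : ℕ) : catB i (j + 2) = catB (i + 1) (j + 1) - catB i j := by
  by_cases hle : j ≤ i
  · by_cases hpar : (i - j) % 2 = 0
    · obtain ⟨r, hr⟩ : ∃ r, i = j + 2 * r := ⟨(i - j) / 2, by omega⟩
      subst hr
      rcases r with _ | s
      · simp only [Nat.mul_zero, Nat.add_zero]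
        rw [catB_of_lt (by omega), catB_diag, catB_diag]
        ring
      · have e1 : j + 2 * (s + 1) + 1 = j + 2 * s + 3 := by ring
        have c1 : j + 2 ≤ j + 2 * (s + 1) ∧ (j + 2 * (s + 1) - (j + 2)) % 2 = 0 := by omega
        have c2 : j + 1 ≤ j + 2 * (s + 1) + 1 ∧ (j + 2 * (s + 1) + 1 - (j + 1)) % 2 = 0 := by omega
        have c3 : j ≤ j + 2 * (s + 1) ∧ (j + 2 * (s + 1) - j) % 2 = 0 := by omega
        rw [catB, if_pos c1, catB, if_pos c2, catB, if_pos c3,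
          show j + 2 * (s + 1) - (j + 2) = 2 * s by omega,
          show j + 2 * (s + 1) + 1 - (j + 1) = 2 * (s + 1) by omega,
          show j + 2 * (s + 1) - j = 2 * (s + 1) by omega,
          Nat.mul_div_cancel_left _ (by norm_num : 0 < 2),
          Nat.mul_div_cancel_left _ (by norm_num : 0 < 2),
          show j + 2 * (s + 1) + 1 = (j + 2 * s + 3) by ring]
        rw [Nat.choose_succ_succ (j + 2 * s + 3) s]
        have key := Nat.choose_succ_right_eq (j + 2 * s + 3) s
        rw [show j + 2 * s + 3 - s = j + s + 3 by omega] at key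
        have keyQ : (Nat.choose (j + 2*s+3) (s+1) : ℚ) * ((s:ℚ) + 1)
            = (Nat.choose (j + 2*s+3) s : ℚ) * ((j:ℚ) + (s:ℚ) + 3) := by exact_mod_cast key
        have h2 : ((j + 2*(s+1) : ℕ) : ℚ) + 1 ≠ 0 := by positivity
        have h3 : ((j + 2*s+3 : ℕ) : ℚ) + 1 ≠ 0 := by positivity
        push_cast at h2 h3 ⊢
        field_simp
        linear_combination -2 * keyQ
    · rw [catB, if_neg (by omega), catB, if_neg (by omega), catB, if_neg (by omega)]
      ring
  · rw [catB_of_lt (by omega), catB_of_lt (by omega), catB_of_lt (by omega)]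
    ring

lemma catL_eq_catB : ∀ j i : ℕ, catL (X ^ i * catPoly j) = catB i j := by
  intro j
  induction j using Nat.twoStepInduction with
  | zero => intro i; rw [catPoly, mul_one, catL_Xpow, catB_zero]
  | one => intro i; rw [catPoly, ← pow_succ, catL_Xpow, catB_one]
  | more j ih1 ih2 =>
    intro i
    have : X ^ i * catPoly (j + 2)
        = X ^ (i + 1) * catPoly (j + 1) - X ^ i * catPoly j := by
      rw [catPoly]; ring
    rw [this, map_sub, ih2, ih1, catB_rec]

/-- Determinantal formula for the Catalan polynomials: `Q_n` equals the
determinant of the `(n+1)×(n+1)` matrix whose first `n` rows are the Catalan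
moments `μ_i, …, μ_{i+n}` and whose last row is `1, x, …, xⁿ`. -/
theorem catPoly_det_formula (n : ℕ) :
    catPoly n =
      Matrix.det (Matrix.of fun i j : Fin (n + 1) =>
        if (i : ℕ) = n then (Polynomial.X : Polynomial ℚ) ^ (j : ℕ)
        else Polynomial.C (catMoment ((i : ℕ) + (j : ℕ)))) := by
  set A : Matrix (Fin (n+1)) (Fin (n+1)) (Polynomial ℚ) :=
    Matrix.of fun i j : Fin (n + 1) =>
      if (i : ℕ) = n then (Polynomial.X : Polynomial ℚ) ^ (j : ℕ)
      else Polynomial.C (catMoment ((i : ℕ) + (j : ℕ))) with hA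
  set S : Matrix (Fin (n+1)) (Fin (n+1)) (Polynomial ℚ) :=
    Matrix.of fun j k : Fin (n + 1) => Polynomial.C ((catPoly (j : ℕ)).coeff (k : ℕ)) with hS
  have hdeg : ∀ j : Fin (n+1), (catPoly (j : ℕ)).natDegree = (j : ℕ) :=
    fun j => (catPoly_monic_natDegree _).2
  have hStri : S.BlockTriangular OrderDual.toDual := by
    intro i j hij
    have hij' : (i : ℕ) < (j : ℕ) := hij
    show Polynomial.C ((catPoly (i : ℕ)).coeff (j : ℕ)) = 0
    rw [coeff_eq_zero_of_natDegree_lt (by rw [hdeg i]; exact hij'), map_zero]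
  have hSdet : S.det = 1 := by
    rw [Matrix.det_of_lowerTriangular S hStri]
    refine Finset.prod_eq_one fun i _ => ?_
    show Polynomial.C ((catPoly (i : ℕ)).coeff (i : ℕ)) = 1
    have hmon := (catPoly_monic_natDegree (i : ℕ)).1
    have hc := hmon.coeff_natDegree
    rw [hdeg i] at hc
    rw [hc, map_one]
  have hmul : A * S.transpose = Matrix.of fun i j : Fin (n+1) =>
      if (i : ℕ) = n then catPoly (j : ℕ) else Polynomial.C (catB (i : ℕ) (j : ℕ)) := by
    refine Matrix.ext fun i j => ?_
    rw [Matrix.mul_apply]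
    by_cases hi : (i : ℕ) = n
    · simp only [hA, hS, Matrix.of_apply, Matrix.transpose_apply, hi, eq_self_iff_true, if_true]
      rw [Fin.sum_univ_eq_sum_range (fun k => (X:Polynomial ℚ) ^ k * Polynomial.C ((catPoly (j:ℕ)).coeff k))]
      conv_rhs => rw [(catPoly (j : ℕ)).as_sum_range' (n+1) (by rw [hdeg j]; omega)]
      refine Finset.sum_congr rfl fun k _ => ?_
      rw [mul_comm, C_mul_X_pow_eq_monomial]
    · simp only [hA, hS, Matrix.of_apply, Matrix.transpose_apply, if_neg hi]
      rw [← catL_eq_catB (j : ℕ) (i : ℕ), catL_Xpow_mul (i:ℕ) (n+1) _ (by rw [hdeg j]; omega),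
        map_sum]
      rw [Fin.sum_univ_eq_sum_range
        (fun k => Polynomial.C (catMoment ((i:ℕ) + k)) * Polynomial.C ((catPoly (j:ℕ)).coeff k))]
      refine Finset.sum_congr rfl fun k _ => ?_
      rw [map_mul, mul_comm]
  have hdetN : (A * S.transpose).det = catPoly n := by
    rw [hmul, Matrix.det_succ_column _ (Fin.last n), Finset.sum_eq_single (Fin.last n)]
    · have hlast : ((Fin.last n : Fin (n+1)) : ℕ) = n := rfl
      have tri : ((Matrix.of fun i j : Fin (n+1) =>
          if (i : ℕ) = n then catPoly (j : ℕ) else Polynomial.C (catB (i : ℕ) (j : ℕ))).submatrix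
          (Fin.last n).succAbove (Fin.last n).succAbove).BlockTriangular OrderDual.toDual := by
        intro i j hij
        have hij' : (i : ℕ) < (j : ℕ) := hij
        simp only [Matrix.submatrix_apply, Fin.succAbove_last, Matrix.of_apply, Fin.coe_castSucc]
        rw [if_neg (Nat.ne_of_lt i.is_lt), catB_of_lt hij', map_zero]
      have hsub : ((Matrix.of fun i j : Fin (n+1) =>
          if (i : ℕ) = n then catPoly (j : ℕ) else Polynomial.C (catB (i : ℕ) (j : ℕ))).submatrix
          (Fin.last n).succAbove (Fin.last n).succAbove).det = 1 := by
        rw [Matrix.det_of_lowerTriangular _ tri]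
        refine Finset.prod_eq_one fun i _ => ?_
        simp only [Matrix.submatrix_apply, Fin.succAbove_last, Matrix.of_apply, Fin.coe_castSucc]
        rw [if_neg (Nat.ne_of_lt i.is_lt), catB_diag, map_one]
      have h1 : ((-1 : Polynomial ℚ)) ^ (((Fin.last n : Fin (n+1)):ℕ) + ((Fin.last n : Fin (n+1)):ℕ)) = 1 :=
        Even.neg_one_pow ⟨n, by rw [hlast]⟩
      rw [h1, one_mul, hsub, mul_one]
      simp only [Matrix.of_apply, hlast, eq_self_iff_true, if_true]
    · intro i _ hi
      have hlt : (i : ℕ) < n := Fin.val_lt_last hi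
      have hz : catB (i:ℕ) ((Fin.last n : Fin (n+1)):ℕ) = 0 := by
        rw [Fin.val_last]; exact catB_of_lt hlt
      simp only [Matrix.of_apply, if_neg (Nat.ne_of_lt hlt), hz, map_zero, mul_zero, zero_mul]
    · intro h
      exact absurd (Finset.mem_univ _) h
  rw [← hdetN, Matrix.det_mul, Matrix.det_transpose, hSdet, mul_one]
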